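/- Let n be a natural number with 4 ∤ n and n ≢ 7 (mod 8). Then for every natural number H with H ≥ 3, the partial sum ∑_{h=0}^{H} A(2^h; n) is at least 2^{−6}. -/

import Mathlib

/-! For `h ≥ 4` the term `A(2^h; n)` vanishes once `4 ∤ n`. The odd-`r` part of `S(2^h, a)` cancels
in pairs `r, r + 2^(h-2)`, which makes `S(2^h, a)` invariant under `a ↦ a + 2^(h-2)`; meanwhile
`e(-na/2^h)` picks up the fourth root of unity `e(-n/4) ≠ 1`, so the four translates of each `a`
cancel. The partial sum is therefore `A(1) + A(2) + A(4) + A(8) = 1 + 0 + A(4) + A(8)`, and the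
closed forms `S(4, a) = 2(1 + i^a)`, `S(8, a) = 4 e(a/8)` give `A(4; n) = 1/2`, `A(8; n) = 0`
when `n ≢ 3 (mod 4)`, and `A(4; n) = -1/2`, `A(8; n) = 1/2` when `n ≡ 3 (mod 8)`: the sum is `3/2`
or `1`. -/

open Finset

/-- `e z = exp(2 π i z)`. -/
noncomputable def e (z : ℝ) : ℂ := Complex.exp (2 * Real.pi * Complex.I * z)

/-- The quadratic Gauss sum `S(q,a) = ∑_{r=1}^{q} e(a r² / q)`. -/
noncomputable def S (q : ℕ) (a : ℤ) : ℂ :=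
  ∑ r ∈ Finset.Icc 1 q, e ((a : ℝ) * (r : ℝ) ^ 2 / (q : ℝ))

/-- `A(q;n) = ∑_{1 ≤ a ≤ q, gcd(a,q)=1} q⁻³ S(q,a)³ e(-n a / q)` (so `A(1;n)=1`). -/
noncomputable def A (q n : ℕ) : ℂ :=
  ∑ a ∈ (Finset.Icc 1 q).filter (fun a => Nat.gcd a q = 1),
    (q : ℂ) ^ (-(3 : ℤ)) * S q (a : ℤ) ^ 3 * e (-((n : ℝ) * (a : ℝ) / (q : ℝ)))

open Complex

lemma e_add (x y : ℝ) : e (x + y) = e x * e y := by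
  rw [e, e, e, ← Complex.exp_add]; push_cast; ring_nf

lemma e_nat_mul (t : ℕ) (x : ℝ) : e (t * x) = e x ^ t := by
  rw [e, e, ← Complex.exp_nat_mul]; push_cast; ring_nf

lemma e_intCast (k : ℤ) : e k = 1 := by
  rw [e, ← Complex.exp_int_mul_two_pi_mul_I k]; push_cast; ring_nf

lemma e_eq_one_iff (x : ℝ) : e x = 1 ↔ ∃ k : ℤ, x = k := by
  rw [e, Complex.exp_eq_one_iff]
  refine exists_congr fun k => ⟨fun h => ?_, fun h => by rw [h]; push_cast; ring⟩
  have h2πI : 2 * (Real.pi : ℂ) * I ≠ 0 := by simp [Real.pi_ne_zero]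
  exact_mod_cast mul_left_cancel₀ h2πI (h.trans (mul_comm _ _))

lemma e_eq_of_eq_add_int {x y : ℝ} (k : ℤ) (h : x = y + k) : e x = e y := by
  rw [h, e_add, e_intCast, mul_one]

lemma e_half : e (1 / 2) = -1 := by
  rw [e, ← Complex.exp_pi_mul_I]; push_cast; ring_nf

lemma e_quarter : e (1 / 4) = I := by
  rw [e, show 2 * (Real.pi : ℂ) * I * ((1 / 4 : ℝ) : ℂ) = (Real.pi / 2 : ℝ) * I by push_cast; ring,
    Complex.exp_mul_I, ← ofReal_cos, ← ofReal_sin, Real.cos_pi_div_two, Real.sin_pi_div_two]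
  simp

lemma e_add_half (x : ℝ) : e (x + 1 / 2) = -e x := by
  rw [e_add, e_half, mul_neg_one]

lemma e_intCast_div_two_of_odd {a : ℤ} (ha : Odd a) : e (a / 2) = -1 := by
  obtain ⟨b, rfl⟩ := ha
  rw [e_eq_of_eq_add_int b (by push_cast; ring : ((2 * b + 1 : ℤ) : ℝ) / 2 = 1 / 2 + b), e_half]

lemma sum_Icc_one_two_mul {M : Type*} [AddCommMonoid M] (N : ℕ) (f : ℕ → M) :
    ∑ r ∈ Icc 1 (2 * N), f r = ∑ j ∈ range N, (f (2 * j + 1) + f (2 * j + 2)) := by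
  induction N with
  | zero => simp
  | succ N ih =>
    rw [show 2 * (N + 1) = 2 * N + 1 + 1 by ring, sum_Icc_succ_top (by omega),
      sum_Icc_succ_top (by omega), sum_range_succ, ih, add_assoc]

lemma sum_Icc_one_two_mul_filter_odd {M : Type*} [AddCommMonoid M] (N : ℕ) (f : ℕ → M) :
    ∑ r ∈ (Icc 1 (2 * N)).filter Odd, f r = ∑ j ∈ range N, f (2 * j + 1) := by
  rw [sum_filter, sum_Icc_one_two_mul]
  refine sum_congr rfl fun j _ => ?_
  have hodd : Odd (2 * j + 1) := odd_two_mul_add_one j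
  have heven : ¬ Odd (2 * j + 2) := by
    rw [Nat.not_odd_iff_even]; exact ⟨j + 1, by ring⟩
  rw [if_pos hodd, if_neg heven, add_zero]

lemma sum_range_mul_of_shift {R : Type*} [CommSemiring R] (G : ℕ → R) (N m : ℕ) (ω : R)
    (hG : ∀ x, G (N + x) = ω * G x) :
    ∑ j ∈ range (m * N), G j = (∑ i ∈ range m, ω ^ i) * ∑ j ∈ range N, G j := by
  have hiter : ∀ i x, G (i * N + x) = ω ^ i * G x := by
    intro i
    induction i with
    | zero => simp
    | succ i ih =>
      intro x
      rw [add_mul, one_mul, add_comm (i * N), add_assoc, hG, ih, pow_succ']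
      ring
  induction m with
  | zero => simp
  | succ m ih =>
    rw [add_mul, one_mul, sum_range_add, ih, sum_range_succ, add_mul, mul_sum _ _ (ω ^ m)]
    simp only [hiter]

lemma geom_sum_eq_zero_of_pow_eq_one {K : Type*} [Field K] {ω : K} {m : ℕ} (hω : ω ^ m = 1)
    (hω1 : ω ≠ 1) : ∑ i ∈ range m, ω ^ i = 0 := by
  rw [geom_sum_eq hω1, hω, sub_self, zero_div]

lemma sum_odd_gauss_terms_eq_zero (k : ℕ) {a : ℤ} (ha : Odd a) :
    ∑ j ∈ range (2 ^ (k + 3)), e (a * ((2 * j + 1 : ℕ) : ℝ) ^ 2 / ((2 ^ (k + 4) : ℕ) : ℝ)) = 0 := by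
  obtain ⟨b, rfl⟩ := ha
  have hshift : ∀ x : ℕ,
      e (((2 * b + 1 : ℤ) : ℝ) * ((2 * (2 ^ (k + 1) + x) + 1 : ℕ) : ℝ) ^ 2
          / ((2 ^ (k + 4) : ℕ) : ℝ))
        = -1 * e (((2 * b + 1 : ℤ) : ℝ) * ((2 * x + 1 : ℕ) : ℝ) ^ 2 / ((2 ^ (k + 4) : ℕ) : ℝ)) := by
    intro x
    rw [neg_one_mul, ← e_add_half]
    refine e_eq_of_eq_add_int (b * (2 * x + 1) + x + (2 * b + 1) * 2 ^ k) ?_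
    push_cast
    field_simp
    ring
  rw [show 2 ^ (k + 3) = 4 * 2 ^ (k + 1) by ring, sum_range_mul_of_shift _ _ _ _ hshift]
  norm_num [sum_range_succ]

lemma S_two_pow_add_two_pow (k : ℕ) {a : ℤ} (ha : Odd a) :
    S (2 ^ (k + 4)) (a + 2 ^ (k + 2)) = S (2 ^ (k + 4)) a := by
  simp only [S, show Icc 1 (2 ^ (k + 4)) = Icc 1 (2 * 2 ^ (k + 3)) by ring_nf,
    sum_Icc_one_two_mul, sum_add_distrib]
  have hodd : ∀ j : ℕ,
      e (((a + 2 ^ (k + 2) : ℤ) : ℝ) * ((2 * j + 1 : ℕ) : ℝ) ^ 2 / ((2 ^ (k + 4) : ℕ) : ℝ))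
        = I * e (a * ((2 * j + 1 : ℕ) : ℝ) ^ 2 / ((2 ^ (k + 4) : ℕ) : ℝ)) := by
    intro j
    rw [← e_quarter, ← e_add]
    refine e_eq_of_eq_add_int (j ^ 2 + j) ?_
    push_cast
    field_simp
    ring
  have heven : ∀ j : ℕ,
      e (((a + 2 ^ (k + 2) : ℤ) : ℝ) * ((2 * j + 2 : ℕ) : ℝ) ^ 2 / ((2 ^ (k + 4) : ℕ) : ℝ))
        = e (a * ((2 * j + 2 : ℕ) : ℝ) ^ 2 / ((2 ^ (k + 4) : ℕ) : ℝ)) := by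
    intro j
    refine e_eq_of_eq_add_int ((j + 1) ^ 2) ?_
    push_cast
    field_simp
    ring
  simp only [hodd, heven, ← mul_sum, sum_odd_gauss_terms_eq_zero k ha, mul_zero]

lemma A_two_pow_add_four_eq_zero (k n : ℕ) (hn : ¬ 4 ∣ n) : A (2 ^ (k + 4)) n = 0 := by
  set ω := e (-(n : ℝ) / 4) with hω
  have hω4 : ω ^ 4 = 1 := by
    rw [hω, ← e_nat_mul, ← e_intCast (-n)]
    push_cast
    ring_nf
  have hω1 : ω ≠ 1 := by
    intro h
    obtain ⟨m, hm⟩ := (e_eq_one_iff _).mp h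
    have hnm : (n : ℤ) = 4 * -m := by exact_mod_cast (by linarith : (n : ℝ) = 4 * -m)
    exact hn (Int.natCast_dvd_natCast.mp ⟨-m, hnm⟩)
  have hfilter : (Icc 1 (2 ^ (k + 4))).filter (fun a => Nat.gcd a (2 ^ (k + 4)) = 1)
      = (Icc 1 (2 * 2 ^ (k + 3))).filter Odd := by
    rw [show 2 * 2 ^ (k + 3) = 2 ^ (k + 4) by ring]
    refine filter_congr fun a _ => ?_
    rw [← Nat.coprime_iff_gcd_eq_one, Nat.coprime_pow_right_iff (by omega), Nat.coprime_two_right]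
  have hshift : ∀ x : ℕ,
      (((2 ^ (k + 4) : ℕ) : ℂ) ^ (-(3 : ℤ))
          * S (2 ^ (k + 4)) ((2 * (2 ^ (k + 1) + x) + 1 : ℕ) : ℤ) ^ 3
          * e (-((n : ℝ) * ((2 * (2 ^ (k + 1) + x) + 1 : ℕ) : ℝ) / ((2 ^ (k + 4) : ℕ) : ℝ))))
        = ω * (((2 ^ (k + 4) : ℕ) : ℂ) ^ (-(3 : ℤ)) * S (2 ^ (k + 4)) ((2 * x + 1 : ℕ) : ℤ) ^ 3
          * e (-((n : ℝ) * ((2 * x + 1 : ℕ) : ℝ) / ((2 ^ (k + 4) : ℕ) : ℝ)))) := by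
    intro x
    have hS : S (2 ^ (k + 4)) ((2 * (2 ^ (k + 1) + x) + 1 : ℕ) : ℤ)
        = S (2 ^ (k + 4)) ((2 * x + 1 : ℕ) : ℤ) := by
      rw [show ((2 * (2 ^ (k + 1) + x) + 1 : ℕ) : ℤ) = ((2 * x + 1 : ℕ) : ℤ) + 2 ^ (k + 2) by
        push_cast; ring]
      exact S_two_pow_add_two_pow k (by simp [parity_simps])
    have he : e (-((n : ℝ) * ((2 * (2 ^ (k + 1) + x) + 1 : ℕ) : ℝ) / ((2 ^ (k + 4) : ℕ) : ℝ)))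
        = ω * e (-((n : ℝ) * ((2 * x + 1 : ℕ) : ℝ) / ((2 ^ (k + 4) : ℕ) : ℝ))) := by
      rw [hω, ← e_add]
      congr 1
      push_cast
      field_simp
      ring
    rw [hS, he]
    ring
  rw [A, hfilter, sum_Icc_one_two_mul_filter_odd, show 2 ^ (k + 3) = 4 * 2 ^ (k + 1) by ring,
    sum_range_mul_of_shift _ _ _ _ hshift, geom_sum_eq_zero_of_pow_eq_one hω4 hω1, zero_mul]

lemma S_two_of_odd {a : ℤ} (ha : Odd a) : S 2 a = 0 := by
  rw [S]
  norm_num [sum_Icc_succ_top]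
  have h4 : e (a * 4 / 2) = 1 := (e_eq_one_iff _).mpr ⟨2 * a, by push_cast; ring⟩
  rw [e_intCast_div_two_of_odd ha, h4, neg_add_cancel]

lemma S_four (a : ℤ) : S 4 a = 2 * (1 + e (a / 4)) := by
  rw [S]
  norm_num [sum_Icc_succ_top]
  have h9 : e (a * 9 / 4) = e (a / 4) := e_eq_of_eq_add_int (2 * a) (by push_cast; ring)
  have h16 : e (a * 16 / 4) = 1 := (e_eq_one_iff _).mpr ⟨4 * a, by push_cast; ring⟩
  rw [h9, h16, e_intCast]
  ring

lemma S_eight_of_odd {a : ℤ} (ha : Odd a) : S 8 a = 4 * e (a / 8) := by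
  rw [S]
  norm_num [sum_Icc_succ_top]
  have h4 : e (a * 4 / 8) = -1 := by rw [← e_intCast_div_two_of_odd ha]; ring_nf
  have h9 : e (a * 9 / 8) = e (a / 8) := e_eq_of_eq_add_int a (by ring)
  have h16 : e (a * 16 / 8) = 1 := (e_eq_one_iff _).mpr ⟨2 * a, by push_cast; ring⟩
  have h25 : e (a * 25 / 8) = e (a / 8) := e_eq_of_eq_add_int (3 * a) (by push_cast; ring)
  have h36 : e (a * 36 / 8) = -1 := by
    rw [← e_intCast_div_two_of_odd ha]; exact e_eq_of_eq_add_int (4 * a) (by push_cast; ring)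
  have h49 : e (a * 49 / 8) = e (a / 8) := e_eq_of_eq_add_int (6 * a) (by push_cast; ring)
  have h64 : e (a * 64 / 8) = 1 := (e_eq_one_iff _).mpr ⟨8 * a, by push_cast; ring⟩
  rw [h4, h9, h16, h25, h36, h49, h64]
  ring

lemma A_one (n : ℕ) : A 1 n = 1 := by
  have hS : S 1 1 = 1 := by simpa [S] using e_intCast 1
  have he : e (-n) = 1 := by exact_mod_cast e_intCast (-n)
  simp [A, hS, he]

lemma A_two (n : ℕ) : A 2 n = 0 := by
  rw [A, show (Icc 1 2).filter (fun a => Nat.gcd a 2 = 1) = {1} by decide, sum_singleton,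
    Nat.cast_one, S_two_of_odd odd_one]
  ring

lemma A_four (n : ℕ) : A 4 n = 8⁻¹ * ((1 + I) ^ 3 * (-I) ^ n + (1 - I) ^ 3 * I ^ n) := by
  have h3 : e (3 / 4) = -I := by rw [← e_quarter, ← e_add_half]; norm_num
  have hn1 : e (-(n * 1 / 4)) = (-I) ^ n := by
    rw [e_eq_of_eq_add_int (-n) (by push_cast; ring : -(n * 1 / 4 : ℝ) = n * (3 / 4) + (-n : ℤ)),
      e_nat_mul, h3]
  have hn3 : e (-(n * 3 / 4)) = I ^ n := by
    rw [e_eq_of_eq_add_int (-n) (by push_cast; ring : -(n * 3 / 4 : ℝ) = n * (1 / 4) + (-n : ℤ)),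
      e_nat_mul, e_quarter]
  have h64 : (4 : ℂ) ^ (-3 : ℤ) = 64⁻¹ := by norm_num
  rw [A, show (Icc 1 4).filter (fun a => Nat.gcd a 4 = 1) = {1, 3} by decide, sum_pair (by decide),
    S_four, S_four]
  push_cast
  rw [e_quarter, h3, hn1, hn3, h64]
  ring

lemma A_four_of_mod_four_eq_one_or_two {n : ℕ} (hn : n % 4 = 1 ∨ n % 4 = 2) : A 4 n = 1 / 2 := by
  have hnegI : (-I) ^ 4 = 1 := by rw [neg_pow, I_pow_four]; norm_num
  rw [A_four, I_pow_eq_pow_mod, pow_eq_pow_mod n hnegI]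
  rcases hn with hn | hn <;> rw [hn] <;> norm_num [Complex.ext_iff, pow_succ]

lemma A_four_of_mod_four_eq_three {n : ℕ} (hn : n % 4 = 3) : A 4 n = -(1 / 2) := by
  have hnegI : (-I) ^ 4 = 1 := by rw [neg_pow, I_pow_four]; norm_num
  rw [A_four, I_pow_eq_pow_mod, pow_eq_pow_mod n hnegI, hn]
  norm_num [Complex.ext_iff, pow_succ]

lemma A_eight (n : ℕ) : A 8 n =
    8⁻¹ * (e ((3 - n) / 8) + e ((3 - n) / 8) ^ 3 + e ((3 - n) / 8) ^ 5 + e ((3 - n) / 8) ^ 7) := by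
  have hterm : ∀ a : ℕ, Odd a →
      ((8 : ℕ) : ℂ) ^ (-3 : ℤ) * S 8 (a : ℤ) ^ 3 * e (-(n * a / ((8 : ℕ) : ℝ)))
        = 8⁻¹ * e ((3 - n) / 8) ^ a := by
    intro a ha
    have he : e (a * ((3 - n) / 8)) = e (3 * (a / 8)) * e (-(n * a / 8)) := by
      rw [← e_add]; ring_nf
    rw [S_eight_of_odd (by exact_mod_cast ha), ← e_nat_mul, mul_pow]
    push_cast
    rw [← e_nat_mul 3, he]
    norm_num
    ring
  rw [A, show (Icc 1 8).filter (fun a => Nat.gcd a 8 = 1) = {1, 3, 5, 7} by decide,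
    sum_insert (by decide), sum_insert (by decide), sum_insert (by decide), sum_singleton,
    hterm 1 (by decide), hterm 3 (by decide), hterm 5 (by decide), hterm 7 (by decide)]
  ring

lemma A_eight_eq_zero {n : ℕ} (hn : n % 4 ≠ 3) : A 8 n = 0 := by
  set ω := e ((3 - n) / 8)
  have hfactor : A 8 n = 8⁻¹ * (ω * (1 + ω ^ 2) * (1 + ω ^ 4)) := by rw [A_eight]; ring
  rcases (by omega : n % 2 = 0 ∨ n % 4 = 1) with heven | hodd
  · obtain ⟨m, rfl⟩ : ∃ m, n = 2 * m := ⟨n / 2, by omega⟩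
    have hω4 : ω ^ 4 = -1 := by
      rw [← e_nat_mul, ← e_intCast_div_two_of_odd (a := 3 - 2 * m) (by simp [parity_simps]; decide)]
      push_cast
      ring_nf
    rw [hfactor, hω4]
    ring
  · obtain ⟨m, rfl⟩ : ∃ m, n = 4 * m + 1 := ⟨n / 4, by omega⟩
    have hω2 : ω ^ 2 = -1 := by
      rw [← e_nat_mul, ← e_half]
      exact e_eq_of_eq_add_int (-m) (by push_cast; ring)
    rw [hfactor, hω2]
    ring

lemma A_eight_of_mod_eight_eq_three {n : ℕ} (hn : n % 8 = 3) : A 8 n = 1 / 2 := by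
  obtain ⟨m, rfl⟩ : ∃ m, n = 8 * m + 3 := ⟨n / 8, by omega⟩
  have hω : e ((3 - (8 * m + 3 : ℕ)) / 8) = 1 := (e_eq_one_iff _).mpr ⟨-m, by push_cast; ring⟩
  rw [A_eight, hω]
  norm_num

theorem two_adic_partial_sum_lower_bound (n : ℕ) (h4 : ¬ 4 ∣ n) (h8 : n % 8 ≠ 7)
    (H : ℕ) (hH : 3 ≤ H) :
    ∃ r : ℝ, (∑ h ∈ Finset.range (H + 1), A (2 ^ h) n) = (r : ℂ) ∧
      (2 : ℝ) ^ (-(6 : ℤ)) ≤ r := by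
  have htail (d : ℕ) : ∑ k ∈ range d, A (2 ^ (4 + k)) n = 0 :=
    sum_eq_zero fun k _ => by rw [add_comm 4 k]; exact A_two_pow_add_four_eq_zero k n h4
  have hsplit : ∑ h ∈ range (H + 1), A (2 ^ h) n = A 1 n + A 2 n + A 4 n + A 8 n := by
    obtain ⟨d, hd⟩ : ∃ d, H + 1 = 4 + d := ⟨H - 3, by omega⟩
    rw [hd, sum_range_add, htail, add_zero]
    norm_num [sum_range_succ]
  rw [hsplit, A_one, A_two]
  rcases (by omega : (n % 4 = 1 ∨ n % 4 = 2) ∨ n % 8 = 3) with hn | hn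
  · refine ⟨3 / 2, ?_, by norm_num⟩
    rw [A_four_of_mod_four_eq_one_or_two hn, A_eight_eq_zero (by omega)]
    norm_num
  · refine ⟨1, ?_, by norm_num⟩
    rw [A_four_of_mod_four_eq_three (by omega), A_eight_of_mod_eight_eq_three hn]
    norm_num
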